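/- arXiv:2407.21449 — 6 statements merged into one kernel-verified Lean document; each statement's English description precedes it below -/
import Mathlib

section
/- Let G be a finite abelian group. Then the representation dimension of G equals the rank of G, i.e., the smallest dimension of a faithful complex linear representation of G equals the minimal number of generators of G. -/
/-- The representation dimension of a finite group `G`: the smallest `n` such that
`G` embeds into `GL(n, ℂ)`. -/
noncomputable def repDim (G : Type) [Group G] : ℕ :=
  sInf {n : ℕ | ∃ f : G →* Matrix.GeneralLinearGroup (Fin n) ℂ, Function.Injective f}

/-!
Over an algebraically closed field `k` of characteristic zero, the character group
`G →* kˣ` of a finite abelian group `G` is isomorphic to `G`, and by duality of subgroups a set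
of characters generates it exactly when no element `g ≠ 1` lies in all their kernels.
Diagonal matrices built from `rank G` generating characters give a faithful representation of
dimension `rank G`. Conversely, the elements of `G` act by commuting endomorphisms of finite
order, so a representation `V` is the direct sum of simultaneous eigenspaces, each belonging to
a character; at most `dim V` of them are nonzero, and if `V` is faithful these characters have
trivial joint kernel, so they generate `G →* kˣ` and `rank G ≤ dim V`.
-/

open Module Polynomial

namespace Matrix.GeneralLinearGroup

variable (n k : Type*) [Fintype n] [DecidableEq n] [CommRing k]

noncomputable def diagonalHom : (n → kˣ) →* GL n k :=
  (Units.map (diagonalRingHom n k : (n → k) →* Matrix n n k)).comp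
    MulEquiv.piUnits.symm.toMonoidHom

theorem diagonalHom_injective : Function.Injective (diagonalHom n k) :=
  (Units.map_injective diagonal_injective).comp MulEquiv.piUnits.symm.injective

end Matrix.GeneralLinearGroup

namespace CommGroup

variable {G : Type*} [CommGroup G] [Finite G]

theorem closure_eq_top_iff_forall_apply_eq_one {M : Type*} [CommMonoid M]
    [HasEnoughRootsOfUnity M (Monoid.exponent G)] {S : Set (G →* Mˣ)} :
    Subgroup.closure S = ⊤ ↔ ∀ g : G, (∀ φ ∈ S, φ g = 1) → g = 1 := by
  let e := (subgroupOrderIsoSubgroupMonoidHom G M).symm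
  have hclosure (g : G) : (∀ φ ∈ Subgroup.closure S, φ g = 1) ↔ ∀ φ ∈ S, φ g = 1 :=
    ⟨fun h φ hφ ↦ h φ (Subgroup.subset_closure hφ),
      fun h _ hφ ↦ MonoidHom.mem_ker.1 <| (Subgroup.closure_le (MonoidHom.eval g).ker).2
        (fun φ hφ ↦ MonoidHom.mem_ker.2 (h φ hφ)) hφ⟩
  calc Subgroup.closure S = ⊤ ↔ e (OrderDual.toDual (Subgroup.closure S)) = ⊥ :=
        (e.injective.eq_iff' e.map_bot).symm
    _ ↔ _ := by
        simp only [e, Subgroup.eq_bot_iff_forall, mem_subgroupOrderIsoSubgroupMonoidHom_symm_iff,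
          hclosure]

variable {k : Type*} [Field k] [HasEnoughRootsOfUnity k (Monoid.exponent G)]

theorem rank_le_card_of_forall_apply_eq_one {S : Finset (G →* kˣ)}
    (hS : ∀ g : G, (∀ φ ∈ S, φ g = 1) → g = 1) : Group.rank G ≤ S.card := by
  rw [← Group.rank_congr (monoidHom_mulEquiv_of_hasEnoughRootsOfUnity G k).some]
  exact Group.rank_le (closure_eq_top_iff_forall_apply_eq_one.2 hS)

theorem exists_finset_card_eq_rank_forall_apply_eq_one : ∃ S : Finset (G →* kˣ),
    S.card = Group.rank G ∧ ∀ g : G, (∀ φ ∈ S, φ g = 1) → g = 1 := by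
  obtain ⟨S, hcard, hS⟩ := Group.rank_spec (G →* kˣ)
  refine ⟨S, ?_, closure_eq_top_iff_forall_apply_eq_one.1 hS⟩
  rw [hcard, Group.rank_congr (monoidHom_mulEquiv_of_hasEnoughRootsOfUnity G k).some]

theorem exists_injective_generalLinearGroup_fin_rank :
    ∃ f : G →* GL (Fin (Group.rank G)) k, Function.Injective f := by
  obtain ⟨S, hcard, hS⟩ := exists_finset_card_eq_rank_forall_apply_eq_one (G := G) (k := k)
  let e : Fin (Group.rank G) ≃ S := (S.equivFinOfCardEq hcard).symm
  let φ : G →* (Fin (Group.rank G) → kˣ) := MonoidHom.pi fun i ↦ (e i : G →* kˣ)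
  refine ⟨(Matrix.GeneralLinearGroup.diagonalHom _ k).comp φ,
    (Matrix.GeneralLinearGroup.diagonalHom_injective _ k).comp ?_⟩
  refine (injective_iff_map_eq_one φ).2 fun g hg ↦ hS g fun ψ hψ ↦ ?_
  simpa [φ] using congrFun hg (e.symm ⟨ψ, hψ⟩)

end CommGroup

namespace Representation

variable {k G V : Type*} [Field k] [AddCommGroup V] [Module k V]

section Group

variable [Group G] (ρ : Representation k G V)

/-- Built from generalised eigenspaces, the form in which Mathlib decomposes a commuting family of
endomorphisms; for finite `G` they are eigenspaces (`apply_eq_smul_of_mem_weightSpace`). -/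
def weightSpace (χ : G → k) : Submodule k V :=
  ⨅ g, End.maxGenEigenspace (ρ g) (χ g)

variable [CharZero k] [Finite G]

theorem isSemisimple_apply (g : G) : End.IsSemisimple (ρ g) := by
  have hpow : ρ g ^ Nat.card G = 1 := by rw [← map_pow, pow_card_eq_one', map_one]
  refine End.isSemisimple_of_squarefree_aeval_eq_zero (p := X ^ Nat.card G - 1) ?_ ?_
  · exact (X_pow_sub_one_separable_iff.2 (Nat.cast_ne_zero.2 Nat.card_pos.ne')).squarefree
  · simp [hpow]

variable {ρ} in
theorem apply_eq_smul_of_mem_weightSpace {χ : G → k} {v : V}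
    (hv : v ∈ ρ.weightSpace χ) (g : G) : ρ g v = χ g • v := by
  have hg := Submodule.mem_iInf _ |>.1 hv g
  rw [(ρ.isSemisimple_apply g).isFinitelySemisimple.maxGenEigenspace_eq_eigenspace] at hg
  exact End.mem_eigenspace_iff.1 hg

theorem exists_monoidHom_of_weightSpace_ne_bot {χ : G → k}
    (hχ : ρ.weightSpace χ ≠ ⊥) : ∃ ψ : G →* kˣ, (fun g ↦ (ψ g : k)) = χ := by
  obtain ⟨v, hv, hv0⟩ := Submodule.exists_mem_ne_zero_of_ne_bot hχ
  have hχ_one : χ 1 = 1 := smul_left_injective k hv0 <| by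
    dsimp only
    rw [← apply_eq_smul_of_mem_weightSpace hv, map_one, End.one_apply, one_smul]
  have hχ_mul (g h : G) : χ (g * h) = χ g * χ h := smul_left_injective k hv0 <| by
    dsimp only
    rw [← apply_eq_smul_of_mem_weightSpace hv, map_mul, End.mul_apply,
      apply_eq_smul_of_mem_weightSpace hv, map_smul, apply_eq_smul_of_mem_weightSpace hv,
      smul_smul, mul_comm]
  exact ⟨MonoidHom.toHomUnits ⟨⟨χ, hχ_one⟩, hχ_mul⟩, rfl⟩

end Group

section CommGroup

variable [CommGroup G] (ρ : Representation k G V)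

theorem commute_apply (g h : G) : Commute (ρ g) (ρ h) := by
  rw [Commute, SemiconjBy, ← map_mul, ← map_mul, mul_comm]

theorem iSupIndep_weightSpace : iSupIndep fun ψ : G →* kˣ ↦ ρ.weightSpace (ψ ·) := by
  have := End.independent_iInf_maxGenEigenspace_of_forall_mapsTo ρ
    fun g h μ ↦ End.mapsTo_maxGenEigenspace_of_comm (ρ.commute_apply h g) μ
  exact this.comp fun ψ ψ' h ↦ MonoidHom.ext fun g ↦ Units.ext (congrFun h g)

variable [IsAlgClosed k] [CharZero k] [Finite G] [FiniteDimensional k V]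

theorem iSup_weightSpace_eq_top : ⨆ ψ : G →* kˣ, ρ.weightSpace (ψ ·) = ⊤ := by
  have htop : ⨆ χ : G → k, ρ.weightSpace χ = ⊤ :=
    End.iSup_iInf_maxGenEigenspace_eq_top_of_iSup_maxGenEigenspace_eq_top_of_commute ρ
      (fun g h _ ↦ ρ.commute_apply g h) fun g ↦ End.iSup_maxGenEigenspace_eq_top (ρ g)
  refine eq_top_iff.2 (htop.symm.le.trans (iSup_le fun χ ↦ ?_))
  by_cases hχ : ρ.weightSpace χ = ⊥
  · exact hχ ▸ bot_le
  · obtain ⟨ψ, rfl⟩ := ρ.exists_monoidHom_of_weightSpace_ne_bot hχ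
    exact le_iSup (fun ψ : G →* kˣ ↦ ρ.weightSpace (ψ ·)) ψ

variable {ρ} in
theorem apply_eq_one_of_forall_weightSpace_ne_bot {g : G}
    (hg : ∀ ψ : G →* kˣ, ρ.weightSpace (ψ ·) ≠ ⊥ → ψ g = 1) : ρ g = 1 := by
  have hle (ψ : G →* kˣ) : ρ.weightSpace (ψ ·) ≤ LinearMap.ker (ρ g - 1) := by
    intro v hv
    by_cases hψ : ρ.weightSpace (ψ ·) = ⊥
    · simp [(Submodule.mem_bot k).1 (hψ ▸ hv)]
    · simp [apply_eq_smul_of_mem_weightSpace hv, hg ψ hψ]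
  rw [← sub_eq_zero, ← LinearMap.ker_eq_top, eq_top_iff, ← ρ.iSup_weightSpace_eq_top]
  exact iSup_le hle

theorem exists_finset_card_le_finrank : ∃ S : Finset (G →* kˣ),
    S.card ≤ finrank k V ∧ ∀ g : G, (∀ ψ ∈ S, ψ g = 1) → ρ g = 1 := by
  classical
  have := Fintype.ofFinite (G →* kˣ)
  have := ρ.iSupIndep_weightSpace.fintypeNeBotOfFiniteDimensional
  refine ⟨Finset.univ.filter fun ψ ↦ ρ.weightSpace (ψ ·) ≠ ⊥, ?_, fun g hg ↦ ?_⟩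
  · rw [← Fintype.card_subtype]
    exact ρ.iSupIndep_weightSpace.subtype_ne_bot_le_finrank
  · exact apply_eq_one_of_forall_weightSpace_ne_bot fun ψ hψ ↦ hg ψ (by simpa using hψ)

theorem rank_le_finrank_of_injective (hρ : Function.Injective ρ) :
    Group.rank G ≤ finrank k V := by
  obtain ⟨S, hcard, hS⟩ := ρ.exists_finset_card_le_finrank
  refine (CommGroup.rank_le_card_of_forall_apply_eq_one fun g hg ↦ ?_).trans hcard
  exact hρ <| (hS g hg).trans (map_one ρ).symm

end CommGroup

end Representation

/-- For a finite abelian group, the representation dimension equals the rank,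
i.e. the minimal number of generators. -/
theorem repDim_eq_rank_of_comm (G : Type) [CommGroup G] [Finite G] :
    repDim G = Group.rank G := by
  obtain ⟨f, hf⟩ := CommGroup.exists_injective_generalLinearGroup_fin_rank (G := G) (k := ℂ)
  refine le_antisymm (Nat.sInf_le ⟨f, hf⟩) (le_csInf ⟨_, f, hf⟩ ?_)
  rintro n ⟨f, hf⟩
  let ρ : Representation ℂ G (Fin n → ℂ) :=
    (Units.coeHom _).comp (Matrix.GeneralLinearGroup.toLin.toMonoidHom.comp f)
  have hρ : Function.Injective ρ :=
    Units.val_injective.comp (Matrix.GeneralLinearGroup.toLin.injective.comp hf)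
  simpa using ρ.rank_le_finrank_of_injective hρ
end

section
/- For every real number ε > 0 there exists a prime number q such that φ(q−1) < ε·(q−1), where φ denotes Euler's totient function. -/
open Finset Set

/-- For every `ε > 0` there is a prime `q` with `φ(q-1) < ε * (q-1)`. -/
theorem exists_prime_totient_lt (ε : ℝ) (hε : 0 < ε) :
    ∃ q : ℕ, q.Prime ∧ ((q - 1).totient : ℝ) < ε * ((q - 1 : ℕ) : ℝ) := by
  -- the indicator function of primes, with values 1/p
  set f : ℕ → ℝ := Set.indicator {p | p.Prime} (fun n : ℕ ↦ (1 : ℝ) / n) with hf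
  have hf0 : ∀ n, 0 ≤ f n := fun n ↦
    Set.indicator_nonneg (fun p _ ↦ by positivity) n
  have hdiv := (not_summable_iff_tendsto_nat_atTop_of_nonneg hf0).mp
    not_summable_one_div_on_primes
  -- find N with partial sum > -log ε
  obtain ⟨N, hN⟩ := (hdiv.eventually_gt_atTop (-Real.log ε)).exists
  set S : Finset ℕ := (Finset.range N).filter Nat.Prime with hS
  have hsum : -Real.log ε < ∑ p ∈ S, (1 : ℝ) / p := by
    have heq : ∑ p ∈ S, (1 : ℝ) / p = ∑ i ∈ Finset.range N, f i := by
      rw [hS, Finset.sum_filter]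
      refine Finset.sum_congr rfl fun n _ ↦ ?_
      by_cases h : n.Prime <;> simp [hf, Set.indicator, h]
    rw [heq]; exact hN
  -- the product of inverse-complements over S is < ε
  have hprodS : ∏ p ∈ S, (1 - (p : ℝ)⁻¹) < ε := by
    calc ∏ p ∈ S, (1 - (p : ℝ)⁻¹) ≤ ∏ p ∈ S, Real.exp (-(p : ℝ)⁻¹) := by
          refine Finset.prod_le_prod (fun p hp ↦ ?_) (fun p hp ↦ ?_)
          · have hp2 : 2 ≤ p := (Finset.mem_filter.mp hp).2.two_le
            have : (p : ℝ)⁻¹ ≤ 1 / 2 := by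
              rw [inv_eq_one_div]
              apply div_le_div_of_nonneg_left one_pos.le two_pos
              exact_mod_cast hp2
            linarith
          · have := Real.add_one_le_exp (-((p : ℝ)⁻¹))
            linarith
      _ = Real.exp (-∑ p ∈ S, (1 : ℝ) / p) := by
          rw [← Real.exp_sum]
          congr 1
          rw [← Finset.sum_neg_distrib]
          exact Finset.sum_congr rfl fun p _ ↦ by rw [one_div]
      _ < Real.exp (Real.log ε) := by
          apply Real.exp_lt_exp.mpr; linarith
      _ = ε := Real.exp_log hε
  -- let k be the product of primes in S; find a prime q ≡ 1 mod k
  set k : ℕ := ∏ p ∈ S, p with hk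
  have hk0 : k ≠ 0 := by
    refine (Finset.prod_pos fun p hp ↦ ?_).ne'
    exact (Finset.mem_filter.mp hp).2.pos
  obtain ⟨q, hq, hqk, hqmod⟩ := Nat.exists_prime_gt_modEq_one k hk0
  refine ⟨q, hq, ?_⟩
  have hdvd : k ∣ q - 1 := (Nat.modEq_iff_dvd' hq.one_le).mp hqmod.symm
  have hq1 : q - 1 ≠ 0 := by
    have : 2 ≤ q := hq.two_le
    omega
  -- S is contained in the prime factors of q - 1
  have hsub : S ⊆ (q - 1).primeFactors := by
    intro p hp
    refine Nat.mem_primeFactors.mpr ⟨(Finset.mem_filter.mp hp).2,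
      dvd_trans (Finset.dvd_prod_of_mem _ hp) hdvd, hq1⟩
  -- Euler product formula, over ℝ
  have heuler : ((q - 1).totient : ℝ)
      = ((q - 1 : ℕ) : ℝ) * ∏ p ∈ (q - 1).primeFactors, (1 - (p : ℝ)⁻¹) := by
    have := Nat.totient_eq_mul_prod_factors (q - 1)
    have := congrArg (fun x : ℚ ↦ (x : ℝ)) this
    push_cast at this ⊢
    exact this
  rw [heuler, mul_comm]
  have hq1pos : (0 : ℝ) < ((q - 1 : ℕ) : ℝ) := by
    exact_mod_cast Nat.pos_of_ne_zero hq1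
  refine mul_lt_mul_of_pos_right ?_ hq1pos
  -- the product over all prime factors is at most the product over S
  have key : ∀ p ∈ (q - 1).primeFactors, (0:ℝ) ≤ 1 - (p : ℝ)⁻¹ ∧ 1 - (p : ℝ)⁻¹ ≤ 1 := by
    intro p hp
    have hp2 : 2 ≤ p := (Nat.prime_of_mem_primeFactors hp).two_le
    have h1 : (p : ℝ)⁻¹ ≤ 1 / 2 := by
      rw [inv_eq_one_div]
      apply div_le_div_of_nonneg_left one_pos.le two_pos
      exact_mod_cast hp2
    have h2 : (0 : ℝ) ≤ (p : ℝ)⁻¹ := by positivity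
    constructor <;> linarith
  calc ∏ p ∈ (q - 1).primeFactors, (1 - (p : ℝ)⁻¹)
      ≤ ∏ p ∈ S, (1 - (p : ℝ)⁻¹) := by
        rw [← Finset.prod_sdiff hsub]
        have h1 : ∏ p ∈ (q - 1).primeFactors \ S, (1 - (p : ℝ)⁻¹) ≤ 1 :=
          Finset.prod_le_one
            (fun p hp ↦ (key p (Finset.mem_sdiff.mp hp).1).1)
            (fun p hp ↦ (key p (Finset.mem_sdiff.mp hp).1).2)
        have h2 : (0:ℝ) ≤ ∏ p ∈ S, (1 - (p : ℝ)⁻¹) :=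
          Finset.prod_nonneg fun p hp ↦ (key p (hsub hp)).1
        nlinarith
    _ < ε := hprodS
end

section
/- Let p₁ < p₂ < p₃ < … be the prime numbers in increasing order. Then the partial products ∏_{i=1}^{r} (1 − 1/pᵢ) tend to 0 as r → ∞. -/
/-- The partial products `∏_{i<r} (1 - 1/pᵢ)` over the primes in increasing order
tend to `0` as `r → ∞`. -/
theorem tendsto_prod_one_sub_inv_prime_nth :
    Filter.Tendsto
      (fun r : ℕ => ∏ i ∈ Finset.range r, (1 - 1 / (Nat.nth Nat.Prime i : ℝ)))
      Filter.atTop (nhds 0) := by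
  set f : ℕ → ℝ := fun i => 1 / (Nat.nth Nat.Prime i : ℝ) with hf
  have hinf : (setOf Nat.Prime).Infinite := Nat.infinite_setOf_prime
  have hbij : Function.Bijective (fun i : ℕ => (⟨Nat.nth Nat.Prime i,
      Nat.prime_nth_prime i⟩ : Nat.Primes)) := by
    constructor
    · intro a b hab
      exact Nat.nth_injective hinf (congrArg Subtype.val hab)
    · intro p
      exact ⟨Nat.count Nat.Prime p, Subtype.ext (Nat.nth_count p.2)⟩
  have hns : ¬ Summable f := by
    intro h
    exact Nat.Primes.not_summable_one_div
      (((Equiv.ofBijective _ hbij).summable_iff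
        (f := fun p : Nat.Primes => (1 / p : ℝ))).mp h)
  have hnn : ∀ i, 0 ≤ f i := fun i => by positivity
  have hS : Filter.Tendsto (fun r => ∑ i ∈ Finset.range r, f i)
      Filter.atTop Filter.atTop :=
    (not_summable_iff_tendsto_nat_atTop_of_nonneg hnn).mp hns
  have hexp : Filter.Tendsto (fun r => Real.exp (-(∑ i ∈ Finset.range r, f i)))
      Filter.atTop (nhds 0) :=
    Real.tendsto_exp_atBot.comp (Filter.tendsto_neg_atTop_atBot.comp hS)
  have hle1 : ∀ i, f i ≤ 1 := by
    intro i
    rw [hf]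
    have h2 : (2 : ℝ) ≤ (Nat.nth Nat.Prime i : ℝ) := by
      exact_mod_cast (Nat.prime_nth_prime i).two_le
    rw [div_le_one (by linarith)]
    linarith
  refine tendsto_of_tendsto_of_tendsto_of_le_of_le tendsto_const_nhds hexp
    (fun r => Finset.prod_nonneg fun i _ => by linarith [hle1 i]) ?_
  intro r
  show ∏ i ∈ Finset.range r, (1 - f i) ≤ _
  calc ∏ i ∈ Finset.range r, (1 - f i)
      ≤ ∏ i ∈ Finset.range r, Real.exp (-f i) := by
        apply Finset.prod_le_prod (fun i _ => by linarith [hle1 i])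
        intro i _
        have := Real.add_one_le_exp (-f i)
        linarith
    _ = _ := by rw [← Real.exp_sum, Finset.sum_neg_distrib]
end

section
/- Let G be the semidirect product of the elementary abelian group (ZMod 2)⁴ by the cyclic group ZMod 3, where the generator of ZMod 3 acts on (ZMod 2)⁴ by the linear automorphism (a₁, a₂, a₃, a₄) ↦ (a₂, a₁ + a₂, a₄, a₃ + a₄). Then there exists an injective group homomorphism from G into A₄ × A₄, where A₄ is the alternating group on four letters. (This group G is the group with GAP Id (48, 50).) -/
/-!
Inside `A₄`, conjugation by the 3-cycle `σ = (0 1 2)` permutes the double transpositions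
`a = (0 1)(2 3) ↦ b = (0 3)(1 2) ↦ ab`, i.e. acts on the Klein four-group `⟨a, b⟩ ≅ (ZMod 2)²`
by the matrix `[[0,1],[1,1]]`. Hence `(v, c) ↦ ((a^v₁ b^v₂ σ^c), (a^v₃ b^v₄ σ^c))` is a homomorphism
`(ZMod 2)⁴ ⋊ ZMod 3 → A₄ × A₄`. It is injective on both factors, and since `16` and `3` are
coprime the images of the factors meet trivially, so it is injective.
-/

/-- The homomorphism `AddAut A →* MulAut (Multiplicative A)`. -/
def addAutToMulAut {A : Type} [AddGroup A] :
    Multiplicative (AddAut A) →* MulAut (Multiplicative A) where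
  toFun f := AddEquiv.toMultiplicative f.toAdd
  map_one' := rfl
  map_mul' _ _ := rfl

/-- The homomorphism `Multiplicative (ZMod n) →* G` sending the generator to an
element `g` with `g ^ n = 1`. -/
def zmodHom {n : ℕ} {G : Type} [Group G] (g : G) (hg : g ^ n = 1) :
    Multiplicative (ZMod n) →* G :=
  AddMonoidHom.toMultiplicativeLeft <|
    ZMod.lift n ⟨zmultiplesHom (Additive G) (Additive.ofMul g), by simpa using congrArg Additive.ofMul hg⟩

/-- The block-diagonal automorphism `(a₁, a₂, a₃, a₄) ↦ (a₂, a₁ + a₂, a₄, a₃ + a₄)`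
of `(ZMod 2)⁴` (two diagonal blocks `[[0,1],[1,1]]` over `𝔽₂`). -/
def tau : AddAut (ZMod 2 × ZMod 2 × ZMod 2 × ZMod 2) where
  toFun p := (p.2.1, p.1 + p.2.1, p.2.2.2, p.2.2.1 + p.2.2.2)
  invFun p := (p.1 + p.2.1, p.1, p.2.2.1 + p.2.2.2, p.2.2.1)
  left_inv := by decide
  right_inv := by decide
  map_add' := by decide

lemma tau_pow_three : (addAutToMulAut (Multiplicative.ofAdd tau)) ^ 3 = 1 := by
  have h : (Multiplicative.ofAdd tau) ^ 3 = 1 := by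
    apply Multiplicative.toAdd.injective
    exact AddEquiv.ext (by decide)
  rw [← map_pow, h, map_one]

/-- The action of `ZMod 3` on `(ZMod 2)⁴` given by the block-diagonal matrix. -/
def actC3 : Multiplicative (ZMod 3) →*
    MulAut (Multiplicative (ZMod 2 × ZMod 2 × ZMod 2 × ZMod 2)) :=
  zmodHom (addAutToMulAut (Multiplicative.ofAdd tau)) tau_pow_three

open Function

namespace SemidirectProduct

variable {N G H : Type*} [Group N] [Group G] [Group H] {φ : G →* MulAut N}

theorem lift_injective_of_coprime {fn : N →* H} {fg : G →* H}
    (h : ∀ g, fn.comp (φ g).toMonoidHom = (MulAut.conj (fg g)).toMonoidHom.comp fn)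
    (hn : Injective fn) (hg : Injective fg) (hcop : (Nat.card N).Coprime (Nat.card G)) :
    Injective (lift fn fg h) := by
  have hdisj : Disjoint fn.range fg.range := Subgroup.disjoint_of_coprime_natCard <|
    (hcop.coprime_dvd_left (Subgroup.card_range_dvd fn)).coprime_dvd_right
      (Subgroup.card_range_dvd fg)
  rw [injective_iff_map_eq_one]
  rintro ⟨n, g⟩ hx
  have hng : fn n⁻¹ = fg g := by
    rw [map_inv, inv_eq_iff_mul_eq_one]
    exact hx
  have hfg : fg g = 1 := Subgroup.disjoint_def.mp hdisj ⟨n⁻¹, hng⟩ ⟨g, rfl⟩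
  have hg1 : g = 1 := hg (hfg.trans (map_one fg).symm)
  have hn1 : n = 1 := inv_eq_one.mp <| hn ((hng.trans hfg).trans (map_one fn).symm)
  exact SemidirectProduct.ext hn1 hg1

end SemidirectProduct

local notation "A₄" => alternatingGroup (Fin 4)

def threeCycle : A₄ := ⟨c[0, 1, 2], by rw [Equiv.Perm.mem_alternatingGroup]; decide⟩

def kleinA : A₄ := ⟨c[0, 1] * c[2, 3], by rw [Equiv.Perm.mem_alternatingGroup]; decide⟩

def kleinB : A₄ := ⟨c[0, 3] * c[1, 2], by rw [Equiv.Perm.mem_alternatingGroup]; decide⟩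

def vectorHom : Multiplicative (ZMod 2 × ZMod 2 × ZMod 2 × ZMod 2) →* A₄ × A₄ where
  toFun v :=
    (kleinA ^ v.toAdd.1.val * kleinB ^ v.toAdd.2.1.val,
     kleinA ^ v.toAdd.2.2.1.val * kleinB ^ v.toAdd.2.2.2.val)
  map_one' := by decide
  map_mul' := by decide

theorem vectorHom_injective : Injective vectorHom := by
  rw [injective_iff_map_eq_one]
  decide

def diagThreeCycleHom : Multiplicative (ZMod 3) →* A₄ × A₄ :=
  (zmodHom threeCycle (by decide)).prod (zmodHom threeCycle (by decide))

theorem diagThreeCycleHom_injective : Injective diagThreeCycleHom := by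
  rw [injective_iff_map_eq_one]
  decide

theorem vectorHom_comp_actC3 (g : Multiplicative (ZMod 3)) :
    vectorHom.comp (actC3 g).toMonoidHom =
      (MulAut.conj (diagThreeCycleHom g)).toMonoidHom.comp vectorHom := by
  refine MonoidHom.ext fun v => ?_
  show vectorHom (actC3 g v) = diagThreeCycleHom g * vectorHom v * (diagThreeCycleHom g)⁻¹
  revert g v
  decide

/-- The group `(ZMod 2)⁴ ⋊ ZMod 3` (GAP Id `(48, 50)`) embeds into `A₄ × A₄`. -/
theorem semidirect_embeds_alternating_prod :
    ∃ f : (Multiplicative (ZMod 2 × ZMod 2 × ZMod 2 × ZMod 2) ⋊[actC3]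
        Multiplicative (ZMod 3)) →*
      alternatingGroup (Fin 4) × alternatingGroup (Fin 4),
      Function.Injective f :=
  ⟨SemidirectProduct.lift vectorHom diagThreeCycleHom vectorHom_comp_actC3,
    SemidirectProduct.lift_injective_of_coprime _ vectorHom_injective diagThreeCycleHom_injective
      (by rw [Nat.card_eq_fintype_card, Nat.card_eq_fintype_card]; decide)⟩
end

section
/- Let G be a finite group of order 48 whose Sylow 3-subgroup is normal. Then either G is isomorphic to the direct product P × Q of a Sylow 2-subgroup P and the Sylow 3-subgroup Q of G, or there exists a surjective group homomorphism from G onto the symmetric group S₃. -/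
/-!
If the Sylow 2-subgroup `P` (of order 16) is normal, then `P` and the normal Sylow 3-subgroup
`Q` are normal complements of coprime orders, so their elements commute and `G ≃* P × Q`.
Otherwise `P` has index 3, and `G` acts on the three cosets of `P` with kernel the normal core
of `P`. That core lies in `P`, so its index is a multiple of 3 dividing `3! = 6`; it cannot be 3,
for then the core would be `P` itself, which would make `P` normal. Hence the kernel has index 6
and the action maps `G` onto `S₃`.
-/

open MulAction
open scoped Nat

theorem Sylow.card_eq_of_card_eq_pow_mul {G : Type*} [Group G] [Finite G] {p n m : ℕ}
    [hp : Fact p.Prime] (P : Sylow p G) (hG : Nat.card G = p ^ n * m) (hm : ¬p ∣ m) :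
    Nat.card P = p ^ n := by
  have hm0 : m ≠ 0 := by rintro rfl; exact hm (dvd_zero p)
  rw [P.card_eq_multiplicity, hG, Nat.factorization_mul (pow_ne_zero n hp.out.ne_zero) hm0,
    Finsupp.add_apply, hp.out.factorization_pow, Finsupp.single_eq_same,
    Nat.factorization_eq_zero_of_not_dvd hm, add_zero]

namespace Subgroup

variable {G : Type*} [Group G]

/-- `IsComplement' H K` says precisely that `(h, k) ↦ h * k` is bijective. -/
noncomputable def IsComplement'.mulEquivProdOfNormal {H K : Subgroup G} [hH : H.Normal]
    [hK : K.Normal] (h : H.IsComplement' K) : G ≃* H × K :=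
  (MulEquiv.ofBijective (H.subtype.noncommCoprod K.subtype fun x y =>
    commute_of_normal_of_disjoint H K hH hK h.disjoint x y x.2 y.2) h).symm

theorem eq_of_le_of_index_eq {H K : Subgroup G} (hle : H ≤ K) (h : H.index = K.index)
    (hK : K.index ≠ 0) : H = K := by
  have h1 : H.relIndex K * K.index = 1 * K.index := by rw [relIndex_mul_index hle, h, one_mul]
  exact le_antisymm hle
    (relIndex_eq_one.mp (Nat.eq_of_mul_eq_mul_right (Nat.pos_of_ne_zero hK) h1))

theorem index_normalCore_dvd_factorial {H : Subgroup G} (hH : H.index ≠ 0) :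
    H.normalCore.index ∣ H.index ! := by
  have : Finite (G ⧸ H) := index_ne_zero_iff_finite.mp hH
  rw [normalCore_eq_ker, index_ker, index_eq_card, ← Nat.card_perm]
  exact card_subgroup_dvd_card (toPermHom G (G ⧸ H)).range

theorem toPermHom_surjective_of_index_normalCore_eq_factorial {H : Subgroup G}
    (hH : H.index ≠ 0) (h : H.normalCore.index = H.index !) :
    Function.Surjective (toPermHom G (G ⧸ H)) := by
  have : Finite (G ⧸ H) := index_ne_zero_iff_finite.mp hH
  rw [← MonoidHom.range_eq_top]
  refine eq_top_of_card_eq _ ?_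
  rw [← index_ker, ← normalCore_eq_ker, h, index_eq_card, Nat.card_perm]

theorem index_normalCore_eq_six_of_index_eq_three {H : Subgroup G} (hH : H.index = 3)
    (hn : ¬H.Normal) : H.normalCore.index = 6 := by
  have hdvd6 : H.normalCore.index ∣ 6 := by
    simpa [hH, Nat.factorial] using index_normalCore_dvd_factorial (H := H) (by omega)
  have hdvd3 : 3 ∣ H.normalCore.index := hH ▸ index_dvd_of_le H.normalCore_le
  have hne3 : H.normalCore.index ≠ 3 := fun h3 =>
    hn (eq_of_le_of_index_eq H.normalCore_le (h3.trans hH.symm) (by omega) ▸ H.normalCore_normal)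
  have hle : H.normalCore.index ≤ 6 := Nat.le_of_dvd (by norm_num) hdvd6
  interval_cases H.normalCore.index <;> omega

theorem exists_surjective_perm_fin_three_of_index_eq_three {H : Subgroup G} (hH : H.index = 3)
    (hn : ¬H.Normal) : ∃ f : G →* Equiv.Perm (Fin 3), Function.Surjective f := by
  have : Finite (G ⧸ H) := index_ne_zero_iff_finite.mp (by omega)
  let e : G ⧸ H ≃ Fin 3 := Finite.equivFinOfCardEq (index_eq_card H ▸ hH)
  refine ⟨e.permCongrHom.toMonoidHom.comp (toPermHom G (G ⧸ H)), ?_⟩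
  exact e.permCongrHom.surjective.comp <| toPermHom_surjective_of_index_normalCore_eq_factorial
    (by omega) (by rw [index_normalCore_eq_six_of_index_eq_three hH hn, hH]; rfl)

end Subgroup

/-- A group of order 48 with a normal Sylow 3-subgroup is either a direct product of a
Sylow 2-subgroup and the Sylow 3-subgroup, or surjects onto `S₃`. -/
theorem order48_normal_sylow3_dichotomy (G : Type) [Group G] (hG : Nat.card G = 48)
    (Q : Sylow 3 G) (hQ : (Q : Subgroup G).Normal) :
    (∃ P : Sylow 2 G, Nonempty (G ≃* (↥(P : Subgroup G) × ↥(Q : Subgroup G)))) ∨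
    (∃ f : G →* Equiv.Perm (Fin 3), Function.Surjective f) := by
  have : Finite G := Nat.finite_of_card_ne_zero (by omega)
  obtain ⟨P⟩ : Nonempty (Sylow 2 G) := inferInstance
  have hP : Nat.card P = 16 := P.card_eq_of_card_eq_pow_mul (n := 4) (m := 3) hG (by norm_num)
  have hQ3 : Nat.card Q = 3 := Q.card_eq_of_card_eq_pow_mul (n := 1) (m := 16) hG (by norm_num)
  by_cases hPn : (P : Subgroup G).Normal
  · have hPQ : (P : Subgroup G).IsComplement' Q :=
      Subgroup.isComplement'_of_coprime (by rw [hP, hQ3, hG]) (by rw [hP, hQ3]; norm_num)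
    exact .inl ⟨P, ⟨hPQ.mulEquivProdOfNormal⟩⟩
  · have hindex : (P : Subgroup G).index = 3 := by
      have := (P : Subgroup G).index_mul_card
      rw [hP, hG] at this
      omega
    exact .inr (Subgroup.exists_surjective_perm_fin_three_of_index_eq_three hindex hPn)
end

section
/- Let G be a finite group of order 48 whose Sylow 2-subgroups are not normal. Then G has exactly 3 Sylow 2-subgroups, the homomorphism from G to the permutation group of the set of Sylow 2-subgroups given by the conjugation action is surjective onto a copy of S₃ (i.e., its image has order 6, equivalently the conjugation action map G → Equiv.Perm (Sylow 2 G) has image of cardinality 6), and the kernel of this homomorphism has order 8. -/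
/-- If `G` has order 48 and no normal Sylow 2-subgroup, then `G` has exactly three
Sylow 2-subgroups, the conjugation action `G → Perm (Sylow 2 G)` has image of order 6
(a copy of `S₃`, so the induced map is surjective onto it), and its kernel has
order 8. -/
theorem order48_sylow2_action (G : Type) [Group G] (hG : Nat.card G = 48)
    (h : ∀ P : Sylow 2 G, ¬ (P : Subgroup G).Normal) :
    Nat.card (Sylow 2 G) = 3 ∧
    Nat.card (MulAction.toPermHom G (Sylow 2 G)).range = 6 ∧
    Nat.card (MulAction.toPermHom G (Sylow 2 G)).ker = 8 := by
  haveI h2 : Fact (Nat.Prime 2) := ⟨Nat.prime_two⟩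
  haveI : Finite G := Nat.finite_of_card_ne_zero (by rw [hG]; norm_num)
  obtain ⟨P⟩ : Nonempty (Sylow 2 G) := inferInstance
  have hfact : Nat.factorization (Nat.card G) 2 = 4 := by
    rw [hG, show (48:ℕ) = 2 ^ 4 * 3 from rfl,
      Nat.factorization_mul (by norm_num) (by norm_num), Nat.Prime.factorization_pow Nat.prime_two]
    simp [Nat.factorization_eq_zero_of_not_dvd]
  have hP : Nat.card P = 16 := by
    rw [P.card_eq_multiplicity, hfact]; norm_num
  have hmul := Subgroup.card_mul_index (P : Subgroup G)
  rw [show Nat.card (P : Subgroup G) = 16 from hP, hG] at hmul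
  have hindex : (P : Subgroup G).index = 3 := by omega
  have hdvd : Nat.card (Sylow 2 G) ∣ 3 := hindex ▸ P.card_dvd_index
  have hne1 : Nat.card (Sylow 2 G) ≠ 1 := by
    intro h1
    apply h P
    rw [← Subgroup.normalizer_eq_top_iff]
    rw [P.card_eq_index_normalizer] at h1
    exact Subgroup.index_eq_one.mp h1
  have hcard3 : Nat.card (Sylow 2 G) = 3 :=
    ((Nat.dvd_prime Nat.prime_three).mp hdvd).resolve_left hne1
  set f := MulAction.toPermHom G (Sylow 2 G) with hf
  have hkerstab : f.ker ≤ MulAction.stabilizer G P := by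
    intro g hg
    have h1 : f g = 1 := hg
    have h2 : f g P = P := by rw [h1]; rfl
    exact h2
  have hstabindex : (MulAction.stabilizer G P).index = 3 := by
    rw [MulAction.index_stabilizer_of_transitive, hcard3]
  have h3dvd : 3 ∣ Nat.card f.range := by
    rw [← Subgroup.index_ker]
    exact hstabindex ▸ Subgroup.index_dvd_of_le hkerstab
  have hperm : Nat.card (Equiv.Perm (Sylow 2 G)) = 6 := by
    haveI := Classical.decEq (Sylow 2 G)
    haveI : Fintype (Sylow 2 G) := Fintype.ofFinite _
    rw [Nat.card_eq_fintype_card, Fintype.card_perm, ← Nat.card_eq_fintype_card, hcard3]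
    rfl
  have hdvd6 : Nat.card f.range ∣ 6 := hperm ▸ Subgroup.card_subgroup_dvd_card f.range
  have hker_mul : Nat.card f.ker * Nat.card f.range = 48 := by
    rw [← Subgroup.index_ker, Subgroup.card_mul_index f.ker, hG]
  have hrne0 : Nat.card f.range ≠ 0 := by
    intro h0
    rw [h0, mul_zero] at hker_mul
    omega
  have hne3 : Nat.card f.range ≠ 3 := by
    intro h3
    rw [h3] at hker_mul
    have hker16 : Nat.card f.ker = 16 := by omega
    have hS : Nat.card (f.ker : Subgroup G) = 2 ^ (Nat.card G).factorization 2 := by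
      rw [hfact]; exact hker16
    apply h (Sylow.ofCard f.ker hS)
    rw [Sylow.coe_ofCard]
    infer_instance
  have hle : Nat.card f.range ≤ 6 := Nat.le_of_dvd (by norm_num) hdvd6
  have hr6 : Nat.card f.range = 6 := by omega
  rw [hr6] at hker_mul
  exact ⟨hcard3, hr6, by omega⟩
end
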